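/- arXiv:1404.2679 — 4 statements merged into one kernel-verified Lean document; each statement's English description precedes it below -/
import Mathlib

section
/- Let X be an mm-space with finite diameter, let 0 < κ < 1 and 1 ≤ p < +∞. Then ObsDiam(X_p^n; -κ) ≤ C_{κ,p} · diam(X) · n^{1/(2p)} for every natural number n ≥ 1, where C_{κ,p} = 4√(2 log(2/κ)) if p = 1 and C_{κ,p} = 4 + 4√(2 log(2/κ)) if 1 < p < +∞. -/
open MeasureTheory Filter Topology Bornology

noncomputable section

/-- The partial diameter `diam(ν; α)` of a Borel measure `ν` on `ℝ`:
the infimum of diameters of Borel sets `A` with `ν A ≥ α`.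
(Unbounded sets have infinite diameter, so they are excluded.) -/
def partialDiam (ν : Measure ℝ) (α : ℝ) : ℝ :=
  sInf {r : ℝ | ∃ A : Set ℝ, MeasurableSet A ∧ IsBounded A ∧
    ENNReal.ofReal α ≤ ν A ∧ r = Metric.diam A}

/-- The observable diameter `ObsDiam(X; -κ)` of a probability measure `μ` with respect to
an explicitly given distance function `d` on `X`: the supremum of `diam(f_*μ; 1-κ)` over
all (Borel measurable) `1`-Lipschitz functions `f : X → ℝ`. -/
def obsDiam {X : Type*} [MeasurableSpace X] (d : X → X → ℝ)
    (μ : Measure X) (κ : ℝ) : ℝ :=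
  sSup {r : ℝ | ∃ f : X → ℝ, Measurable f ∧ (∀ x y, |f x - f y| ≤ d x y) ∧
    r = partialDiam (μ.map f) (1 - κ)}

/-- The `l_p`-distance on the `n`-fold product, for `1 ≤ p < ∞`. -/
def lpDist {X : Type*} (d : X → X → ℝ) (p : ℝ) {n : ℕ} (x y : Fin n → X) : ℝ :=
  (∑ i, d (x i) (y i) ^ p) ^ (1 / p)

open ProbabilityTheory Real Set
open scoped NNReal

/-!
Fix a `1`-Lipschitz `f` on `X_p^n`, write `D = diam X`, and let `α` be a `κ/2`-quantile of `f`.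
The `l_1`-distance `g` to the sublevel set `A = {f ≤ α}` changes by at most `D` when one
coordinate changes, so by McDiarmid's inequality (Hoeffding's lemma in one coordinate, induction
over the others) `g - 𝔼 g` is sub-Gaussian with variance proxy `n D² / 4`. Since `g = 0` on `A`
and `A` has measure at least `κ/2`, this forces `g < D √(2 n log(2/κ))` outside a set of measure
`κ/2`. On `X^n`, `d_p ≤ D^(1 - 1/p) d_1^(1/p)`, so outside a set of measure `κ` the values of `f`
lie in `[α, α + D (2 n log(2/κ))^(1/(2p))]`, and `(2 log(2/κ))^(1/(2p)) ≤ √(2 log(2/κ)) ≤ C_{κ,p}`.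
-/

lemma ProbabilityTheory.hasSubgaussianMGF_of_sub_le {Ω : Type*} [MeasurableSpace Ω]
    {μ : Measure Ω} [IsProbabilityMeasure μ] {X : Ω → ℝ} (hX : Measurable X) {D : ℝ≥0}
    (hD : ∀ ω ω', X ω - X ω' ≤ D) :
    HasSubgaussianMGF (fun ω ↦ X ω - ∫ ω', X ω' ∂μ) ((D / 2) ^ 2) μ := by
  have : Nonempty Ω := nonempty_of_isProbabilityMeasure μ
  obtain ⟨ω₀⟩ := id this
  have hbdd : BddBelow (range X) :=
    ⟨X ω₀ - D, by rintro _ ⟨ω, rfl⟩; linarith [hD ω₀ ω]⟩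
  have hmem : ∀ ω, X ω ∈ Icc (⨅ ω, X ω) ((⨅ ω, X ω) + D) := fun ω ↦
    ⟨ciInf_le hbdd ω, by linarith [le_ciInf fun ω' ↦ (by linarith [hD ω ω'] : X ω - D ≤ X ω')]⟩
  simpa using hasSubgaussianMGF_of_mem_Icc hX.aemeasurable (ae_of_all μ hmem)

lemma ProbabilityTheory.hasSubgaussianMGF_prod_of_sub_le {α β : Type*} [MeasurableSpace α]
    [MeasurableSpace β] {μ : Measure α} {ν : Measure β} [IsProbabilityMeasure μ]
    [IsProbabilityMeasure ν] {g : α × β → ℝ} (hg : Measurable g) {M : ℝ}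
    (hM : ∀ z, |g z| ≤ M) {c D : ℝ≥0}
    (hν : ∀ a, HasSubgaussianMGF (fun b ↦ g (a, b) - ∫ b', g (a, b') ∂ν) c ν)
    (hD : ∀ a a' b, g (a, b) - g (a', b) ≤ D) :
    HasSubgaussianMGF (fun z ↦ g z - ∫ z', g z' ∂(μ.prod ν)) ((D / 2) ^ 2 + c) (μ.prod ν) := by
  have hmem : ∀ z, g z ∈ Icc (-M) M := fun z ↦ abs_le.mp (hM z)
  have hint : ∀ a, Integrable (fun b ↦ g (a, b)) ν := fun a ↦
    .of_mem_Icc _ _ (hg.comp measurable_prodMk_left).aemeasurable (ae_of_all _ fun b ↦ hmem _)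
  set G : α → ℝ := fun a ↦ ∫ b, g (a, b) ∂ν
  set m := ∫ z, g z ∂(μ.prod ν)
  have hm : m = ∫ a, G a ∂μ :=
    integral_prod g (.of_mem_Icc _ _ hg.aemeasurable (ae_of_all _ hmem))
  have hGD : ∀ a a', G a - G a' ≤ D := fun a a' ↦ by
    rw [← integral_sub (hint a) (hint a')]
    exact (integral_mono ((hint a).sub (hint a')) (integrable_const _) (hD a a')).trans (by simp)
  have hG := hasSubgaussianMGF_of_sub_le
    (hg.stronglyMeasurable.integral_prod_right' (ν := ν)).measurable hGD (μ := μ)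
  rw [← hm] at hG
  have hexp : ∀ t, Integrable (fun z ↦ exp (t * (g z - m))) (μ.prod ν) := fun t ↦
    integrable_exp_mul_of_mem_Icc (a := -M - m) (b := M - m) (hg.sub_const m).aemeasurable
      (ae_of_all _ fun z ↦ ⟨by linarith [(hmem z).1], by linarith [(hmem z).2]⟩)
  refine ⟨hexp, fun t ↦ ?_⟩
  have hsplit : ∀ a b, exp (t * (g (a, b) - m)) =
      exp (t * (G a - m)) * exp (t * (g (a, b) - G a)) := fun a b ↦ by
    rw [← exp_add]; ring_nf
  calc mgf (fun z ↦ g z - m) (μ.prod ν) t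
      = ∫ a, exp (t * (G a - m)) * mgf (fun b ↦ g (a, b) - G a) ν t ∂μ := by
        rw [mgf, integral_prod _ (hexp t)]
        simp only [hsplit, integral_const_mul, mgf]
    _ ≤ ∫ a, exp (t * (G a - m)) * exp (c * t ^ 2 / 2) ∂μ := by
        refine integral_mono_of_nonneg (ae_of_all _ fun a ↦ mul_nonneg (exp_pos _).le mgf_nonneg)
          ((hG.integrable_exp_mul t).mul_const _) (ae_of_all _ fun a ↦ ?_)
        exact mul_le_mul_of_nonneg_left ((hν a).mgf_le t) (exp_pos _).le
    _ = mgf (fun a ↦ G a - m) μ t * exp (c * t ^ 2 / 2) := integral_mul_const _ _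
    _ ≤ exp ((D / 2) ^ 2 * t ^ 2 / 2) * exp (c * t ^ 2 / 2) :=
        mul_le_mul_of_nonneg_right (hG.mgf_le t) (exp_pos _).le
    _ = exp (((D / 2) ^ 2 + c : ℝ≥0) * t ^ 2 / 2) := by
        rw [← exp_add]; push_cast; ring_nf

theorem ProbabilityTheory.hasSubgaussianMGF_pi_of_bounded_differences {n : ℕ}
    {X : Fin n → Type*} [∀ i, MeasurableSpace (X i)] (μ : ∀ i, Measure (X i))
    [∀ i, IsProbabilityMeasure (μ i)] {g : (∀ i, X i) → ℝ} (hg : Measurable g) {M : ℝ}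
    (hM : ∀ x, |g x| ≤ M) (D : Fin n → ℝ≥0)
    (hD : ∀ x i a, |g (Function.update x i a) - g x| ≤ D i) :
    HasSubgaussianMGF (fun x ↦ g x - ∫ y, g y ∂Measure.pi μ) (∑ i, (D i / 2) ^ 2)
      (Measure.pi μ) := by
  induction n with
  | zero =>
    have hx : ∀ x, g x - ∫ y, g y ∂Measure.pi μ = 0 := fun x ↦ by
      simp [integral_unique, Subsingleton.elim x default]
    simp [hx]
  | succ n ih =>
    have hmp := measurePreserving_piFinSuccAbove μ 0
    set e := MeasurableEquiv.piFinSuccAbove X 0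
    set ν := Measure.pi fun j ↦ μ (Fin.succAbove 0 j)
    have he : ∀ a y, e.symm (a, y) = Fin.insertNth 0 a y := fun _ _ ↦ rfl
    set h := g ∘ e.symm
    have hh : Measurable h := hg.comp e.symm.measurable
    have hsec : ∀ a, HasSubgaussianMGF (fun y ↦ h (a, y) - ∫ y', h (a, y') ∂ν)
        (∑ j, (D (Fin.succAbove 0 j) / 2) ^ 2) ν := fun a ↦ by
      refine ih _ (hh.comp measurable_prodMk_left) (fun y ↦ hM _) _ fun y i b ↦ ?_
      simp only [h, Function.comp_apply, he, Fin.insertNth_update]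
      exact hD _ _ _
    have hosc : ∀ a a' y, h (a, y) - h (a', y) ≤ D 0 := fun a a' y ↦ by
      simp only [h, Function.comp_apply, he]
      rw [← Fin.update_insertNth 0 a' a y]
      exact (le_abs_self _).trans (hD _ _ _)
    have key := hasSubgaussianMGF_prod_of_sub_le (μ := μ 0) hh (fun z ↦ hM _) hsec hosc
    have hint : ∫ z, h z ∂((μ 0).prod ν) = ∫ x, g x ∂Measure.pi μ := by
      rw [← hmp.map_eq, integral_map_equiv]
      simp only [h, Function.comp_apply, MeasurableEquiv.symm_apply_apply]
    rw [hint, ← hmp.map_eq, ← Fin.sum_univ_succAbove (fun i ↦ (D i / 2) ^ 2) 0] at key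
    convert key.of_map e.measurable.aemeasurable using 1
    ext x
    simp only [h, Function.comp_apply, MeasurableEquiv.symm_apply_apply]

lemma ProbabilityTheory.HasSubgaussianMGF.measureReal_ge_two_mul_le {Ω : Type*}
    [MeasurableSpace Ω] {μ : Measure Ω} [IsProbabilityMeasure μ] {g : Ω → ℝ} {c : ℝ≥0}
    (hc : c ≠ 0) (hg : HasSubgaussianMGF (fun ω ↦ g ω - ∫ ω', g ω' ∂μ) c μ) {ε : ℝ}
    (hε : 0 < ε) (hzero : ε ≤ μ.real {ω | g ω ≤ 0}) :
    μ.real {ω | 2 * √(2 * c * log (1 / ε)) ≤ g ω} ≤ ε := by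
  set m := ∫ ω, g ω ∂μ
  set r := √(2 * c * log (1 / ε))
  have hc0 : (0 : ℝ) < c := by positivity
  have hlog : 0 ≤ log (1 / ε) :=
    log_nonneg ((one_le_div hε).mpr (hzero.trans measureReal_le_one))
  have hr : exp (-r ^ 2 / (2 * c)) = ε := by
    rw [sq_sqrt (by positivity), neg_div, mul_div_cancel_left₀ _ (by positivity), one_div,
      log_inv, neg_neg, exp_log hε]
  -- otherwise the lower tail bound at `m` would give `μ {g ≤ 0} < ε`
  have hm : m ≤ r := by
    by_contra! hrm
    have hlow : μ.real {ω | g ω ≤ 0} ≤ exp (-m ^ 2 / (2 * c)) :=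
      (measureReal_mono fun ω (hω : g ω ≤ 0) ↦ by
        simp only [mem_ofPred_eq, Pi.neg_apply]; linarith).trans
        (hg.neg.measure_ge_le (ε := m) (by linarith [sqrt_nonneg (2 * c * log (1 / ε))]))
    have : exp (-m ^ 2 / (2 * c)) < exp (-r ^ 2 / (2 * c)) := by gcongr
    linarith
  calc μ.real {ω | 2 * r ≤ g ω} ≤ μ.real {ω | r ≤ g ω - m} :=
        measureReal_mono fun ω (hω : 2 * r ≤ g ω) ↦ by simp only [mem_ofPred_eq]; linarith
    _ ≤ exp (-r ^ 2 / (2 * c)) := hg.measure_ge_le (sqrt_nonneg _)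
    _ = ε := hr

lemma ProbabilityTheory.exists_measureReal_Iio_le_le_measureReal_Iic (ν : Measure ℝ)
    [IsProbabilityMeasure ν] {q : ℝ} (hq0 : 0 < q) (hq1 : q < 1) :
    ∃ α, ν.real (Iio α) ≤ q ∧ q ≤ ν.real (Iic α) := by
  set S := {s | q ≤ cdf ν s}
  have hS : S.Nonempty := ((tendsto_cdf_atTop ν).eventually (eventually_ge_nhds hq1)).exists
  obtain ⟨s₀, hs₀⟩ :=
    ((tendsto_cdf_atBot ν).eventually (eventually_lt_nhds hq0)).exists_forall_of_atBot
  have hSbdd : BddBelow S := ⟨s₀, fun s hs ↦ by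
    by_contra! h
    exact (hs₀ s h.le).not_ge hs⟩
  have hlt : ∀ s < sInf S, cdf ν s < q := fun s hs ↦ by
    by_contra! h
    exact (csInf_le hSbdd h).not_gt hs
  refine ⟨sInf S, ?_, ?_⟩
  · have : ν.real (Iio (sInf S)) = Function.leftLim (cdf ν) (sInf S) := by
      have h := (cdf ν).measure_Iio (tendsto_cdf_atBot ν) (sInf S)
      rw [measure_cdf, sub_zero] at h
      rw [measureReal_def, h, ENNReal.toReal_ofReal]
      exact (cdf_nonneg ν _).trans ((monotone_cdf ν).le_leftLim (sub_one_lt _))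
    rw [this, (monotone_cdf ν).leftLim_eq_sSup]
    exact csSup_le (nonempty_Iio.image _) (by rintro _ ⟨s, hs, rfl⟩; exact (hlt s hs).le)
  · rw [← cdf_eq_real]
    have hcont :=
      ((cdf ν).right_continuous (sInf S)).mono_left (nhdsWithin_mono _ Ioi_subset_Ici_self)
    refine ge_of_tendsto hcont ?_
    filter_upwards [self_mem_nhdsWithin] with s hs
    obtain ⟨s', hs'S, hs's⟩ := exists_lt_of_csInf_lt hS hs
    exact hs'S.trans (monotone_cdf ν hs's.le)

lemma PiLp.dist_toLp_one {ι : Type*} [Fintype ι] {X : ι → Type*}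
    [∀ i, PseudoMetricSpace (X i)] (x y : ∀ i, X i) :
    dist (WithLp.toLp 1 x) (WithLp.toLp 1 y) = ∑ i, dist (x i) (y i) := by
  rw [PiLp.dist_eq_sum (by simp)]
  simp

lemma PiLp.dist_toLp_update_toLp {ι : Type*} [Fintype ι] [DecidableEq ι] {X : ι → Type*}
    [∀ i, PseudoMetricSpace (X i)] (x : ∀ i, X i) (i : ι) (a : X i) :
    dist (WithLp.toLp 1 (Function.update x i a)) (WithLp.toLp 1 x) = dist a (x i) := by
  rw [PiLp.dist_toLp_one, Finset.sum_eq_single i (fun j _ hj ↦ by simp [hj]) (by simp)]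
  simp

lemma lpDist_le_mul_rpow_of_sum_le {X : Type*} {d : X → X → ℝ} {n : ℕ} {x y : Fin n → X}
    {p D t : ℝ} (hp : 1 ≤ p) (hD : 0 ≤ D) (ht : 0 ≤ t) (hd : ∀ i, 0 ≤ d (x i) (y i))
    (hdD : ∀ i, d (x i) (y i) ≤ D) (hsum : ∑ i, d (x i) (y i) ≤ D * t) :
    lpDist d p x y ≤ D * t ^ (1 / p) := by
  have hterm : ∀ i, d (x i) (y i) ^ p ≤ D ^ (p - 1) * d (x i) (y i) := fun i ↦ by
    calc d (x i) (y i) ^ p = d (x i) (y i) ^ (p - 1) * d (x i) (y i) := by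
          rw [← rpow_add_one' (hd i) (by linarith), sub_add_cancel]
      _ ≤ D ^ (p - 1) * d (x i) (y i) := by gcongr; exacts [hd i, hd i, hdD i]
  calc lpDist d p x y ≤ (D ^ (p - 1) * (D * t)) ^ (1 / p) := by
        refine rpow_le_rpow (Finset.sum_nonneg fun i _ ↦ rpow_nonneg (hd i) _) ?_ (by positivity)
        calc ∑ i, d (x i) (y i) ^ p ≤ ∑ i, D ^ (p - 1) * d (x i) (y i) :=
              Finset.sum_le_sum fun i _ ↦ hterm i
          _ ≤ D ^ (p - 1) * (D * t) := by rw [← Finset.mul_sum]; gcongr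
    _ = D * t ^ (1 / p) := by
        rw [← mul_assoc, ← rpow_add_one' hD (by linarith), sub_add_cancel,
          mul_rpow (by positivity) ht, ← rpow_mul hD, mul_one_div_cancel (by linarith), rpow_one]

theorem measureReal_le_infDist_toLp_one_le {n : ℕ} {X : Fin n → Type*}
    [∀ i, PseudoMetricSpace (X i)] [∀ i, SecondCountableTopology (X i)] [∀ i, MeasurableSpace (X i)]
    [∀ i, BorelSpace (X i)] (μ : ∀ i, Measure (X i)) [∀ i, IsProbabilityMeasure (μ i)]
    (hn : n ≠ 0) {D : ℝ} (hD : 0 < D) (hdist : ∀ i (a b : X i), dist a b ≤ D)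
    {A : Set (∀ i, X i)} {ε : ℝ} (hε : 0 < ε) (hA : ε ≤ (Measure.pi μ).real A) :
    (Measure.pi μ).real {x | D * √(2 * log (1 / ε) * n) ≤
      Metric.infDist (WithLp.toLp 1 x) (WithLp.toLp 1 '' A)} ≤ ε := by
  set g := fun x : ∀ i, X i ↦ Metric.infDist (WithLp.toLp 1 x) (WithLp.toLp 1 '' A)
  obtain ⟨y, hy⟩ : A.Nonempty := nonempty_of_measure_ne_zero (μ := Measure.pi μ) fun h ↦ by
    simp only [measureReal_def, h, ENNReal.toReal_zero] at hA; linarith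
  have hg : Measurable g :=
    ((Metric.continuous_infDist_pt _).comp (PiLp.continuous_toLp 1 _)).measurable
  have hbdd : ∀ x, |g x| ≤ n * D := fun x ↦ by
    rw [abs_of_nonneg Metric.infDist_nonneg]
    calc g x ≤ dist (WithLp.toLp 1 x) (WithLp.toLp 1 y) :=
          Metric.infDist_le_dist_of_mem (mem_image_of_mem _ hy)
      _ = ∑ i, dist (x i) (y i) := PiLp.dist_toLp_one x y
      _ ≤ ∑ _i : Fin n, D := Finset.sum_le_sum fun i _ ↦ hdist i _ _
      _ = n * D := by simp
  set D' := D.toNNReal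
  have hD' : (D' : ℝ) = D := Real.coe_toNNReal D hD.le
  have hdiff : ∀ x i a, |g (Function.update x i a) - g x| ≤ D' := fun x i a ↦ by
    calc |g (Function.update x i a) - g x|
        ≤ dist (WithLp.toLp 1 (Function.update x i a)) (WithLp.toLp 1 x) := by
          simpa [Real.dist_eq] using (Metric.lipschitz_infDist_pt _).dist_le_mul
            (WithLp.toLp 1 (Function.update x i a)) (WithLp.toLp 1 x)
      _ ≤ D' := by rw [PiLp.dist_toLp_update_toLp, hD']; exact hdist i _ _
  have hsg := hasSubgaussianMGF_pi_of_bounded_differences μ hg hbdd _ hdiff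
  have hc : ∑ _i : Fin n, (D' / 2) ^ 2 ≠ 0 := by
    simp [hn, D', hD]
  have hzero : ε ≤ (Measure.pi μ).real {x | g x ≤ 0} :=
    hA.trans <| measureReal_mono fun x hx ↦
      (Metric.infDist_zero_of_mem (mem_image_of_mem _ hx)).le
  have hr : 2 * √(2 * ((∑ _i : Fin n, (D' / 2) ^ 2 : ℝ≥0) : ℝ) * log (1 / ε)) =
      D * √(2 * log (1 / ε) * n) := by
    have : 2 * ((∑ _i : Fin n, (D' / 2) ^ 2 : ℝ≥0) : ℝ) * log (1 / ε) =
        (D / 2) ^ 2 * (2 * log (1 / ε) * n) := by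
      push_cast
      simp only [hD', Finset.sum_const, Finset.card_univ, Fintype.card_fin, nsmul_eq_mul]
      ring
    rw [this, sqrt_mul (sq_nonneg _), sqrt_sq (by positivity)]
    ring
  simpa only [hr] using hsg.measureReal_ge_two_mul_le hc hε hzero

lemma partialDiam_map_le_of_le_measureReal_preimage_Icc {α : Type*} [MeasurableSpace α]
    {P : Measure α} [IsFiniteMeasure P] {f : α → ℝ} (hf : Measurable f) {β a b : ℝ}
    (hab : a ≤ b) (h : β ≤ P.real (f ⁻¹' Icc a b)) : partialDiam (P.map f) β ≤ b - a := by
  refine csInf_le ⟨0, by rintro _ ⟨A, -, -, -, rfl⟩; exact Metric.diam_nonneg⟩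
    ⟨Icc a b, measurableSet_Icc, Metric.isBounded_Icc a b, ?_, (Real.diam_Icc hab).symm⟩
  rw [Measure.map_apply hf measurableSet_Icc]
  exact (ENNReal.ofReal_le_iff_le_toReal (measure_ne_top _ _)).mpr h

lemma obsDiam_le {X : Type*} [MeasurableSpace X] {d : X → X → ℝ} {μ : Measure X} {κ B : ℝ}
    (hB : 0 ≤ B) (h : ∀ f : X → ℝ, Measurable f → (∀ x y, |f x - f y| ≤ d x y) →
      partialDiam (μ.map f) (1 - κ) ≤ B) :
    obsDiam d μ κ ≤ B :=
  Real.sSup_le (by rintro _ ⟨f, hf, hfd, rfl⟩; exact h f hf hfd) hB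

lemma le_add_mul_rpow_of_infDist_toLp_one_lt {X : Type*} [PseudoMetricSpace X] {n : ℕ}
    {f : (Fin n → X) → ℝ} {p D t α : ℝ} (hp : 1 ≤ p)
    (hlip : ∀ x y, |f x - f y| ≤ lpDist dist p x y) (hD : 0 ≤ D) (hdist : ∀ a b : X, dist a b ≤ D)
    (ht : 0 ≤ t) (hA : (f ⁻¹' Iic α).Nonempty) {x : Fin n → X}
    (hx : Metric.infDist (WithLp.toLp 1 x) (WithLp.toLp 1 '' (f ⁻¹' Iic α)) < D * t) :
    f x ≤ α + D * t ^ (1 / p) := by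
  obtain ⟨_, ⟨y, hy, rfl⟩, hxy⟩ := (Metric.infDist_lt_iff (hA.image _)).mp hx
  rw [PiLp.dist_toLp_one] at hxy
  have := lpDist_le_mul_rpow_of_sum_le hp hD ht (fun i ↦ dist_nonneg) (fun i ↦ hdist _ _) hxy.le
  linarith [(abs_le.mp (hlip x y)).2, show f y ≤ α from hy]

theorem partialDiam_map_pi_le {X : Type*} [MetricSpace X] [SecondCountableTopology X]
    [MeasurableSpace X] [BorelSpace X] {n : ℕ} (μ : Fin n → Measure X)
    [∀ i, IsProbabilityMeasure (μ i)] {D : ℝ} (hD : 0 ≤ D) (hdist : ∀ a b : X, dist a b ≤ D)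
    {κ p : ℝ} (hκ0 : 0 < κ) (hκ1 : κ < 1) (hp : 1 ≤ p) {f : (Fin n → X) → ℝ}
    (hf : Measurable f) (hlip : ∀ x y, |f x - f y| ≤ lpDist dist p x y) :
    partialDiam ((Measure.pi μ).map f) (1 - κ) ≤ D * √(2 * log (2 / κ) * n) ^ (1 / p) := by
  set P := Measure.pi μ
  have : Nonempty (Fin n → X) := nonempty_of_isProbabilityMeasure P
  obtain ⟨x₀⟩ := id this
  by_cases hsub : Subsingleton (Fin n → X)
  · have huniv : f ⁻¹' Icc (f x₀) (f x₀) = univ :=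
      Subsingleton.eq_univ_of_nonempty ⟨x₀, by simp⟩
    refine (partialDiam_map_le_of_le_measureReal_preimage_Icc hf (le_refl (f x₀)) ?_).trans ?_
    · rw [huniv, probReal_univ]
      linarith
    · simp only [sub_self]
      positivity
  have hn : n ≠ 0 := by rintro rfl; exact hsub inferInstance
  have hDpos : 0 < D := hD.lt_of_ne fun h ↦ hsub
    ⟨fun x y ↦ funext fun i ↦ dist_le_zero.mp (h ▸ hdist _ _)⟩
  have : IsProbabilityMeasure (P.map f) := Measure.isProbabilityMeasure_map hf.aemeasurable
  obtain ⟨α, hα_lt, hα_le⟩ := exists_measureReal_Iio_le_le_measureReal_Iic (P.map f)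
    (q := κ / 2) (by linarith) (by linarith)
  rw [map_measureReal_apply hf measurableSet_Iio] at hα_lt
  rw [map_measureReal_apply hf measurableSet_Iic] at hα_le
  have hA : (f ⁻¹' Iic α).Nonempty := nonempty_of_measure_ne_zero (μ := P) fun h ↦ by
    simp only [measureReal_def, h, ENNReal.toReal_zero] at hα_le; linarith
  set t := √(2 * log (2 / κ) * n)
  have hfar :=
    measureReal_le_infDist_toLp_one_le μ hn hDpos (fun _ ↦ hdist) (half_pos hκ0) hα_le
  rw [one_div_div] at hfar
  have hcompl : (f ⁻¹' Icc α (α + D * t ^ (1 / p)))ᶜ ⊆ f ⁻¹' Iio α ∪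
      {x | D * t ≤ Metric.infDist (WithLp.toLp 1 x) (WithLp.toLp 1 '' (f ⁻¹' Iic α))} := by
    intro x hx
    by_contra h
    simp only [mem_union, mem_preimage, mem_Iio, mem_ofPred_eq, not_or, not_lt, not_le] at h
    exact hx ⟨h.1,
      le_add_mul_rpow_of_infDist_toLp_one_lt hp hlip hD hdist (sqrt_nonneg _) hA h.2⟩
  have hmass := (measureReal_mono (μ := P) hcompl).trans (measureReal_union_le _ _)
  rw [probReal_compl_eq_one_sub (hf measurableSet_Icc)] at hmass
  calc partialDiam (P.map f) (1 - κ) ≤ α + D * t ^ (1 / p) - α :=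
        partialDiam_map_le_of_le_measureReal_preimage_Icc hf
          (le_add_of_nonneg_right (by positivity)) (by linarith)
    _ = D * t ^ (1 / p) := by ring

lemma sqrt_mul_natCast_rpow_le {a p : ℝ} (ha : 1 ≤ a) (hp : 1 ≤ p) (n : ℕ) :
    √(a * n) ^ (1 / p) ≤ √a * (n : ℝ) ^ (1 / (2 * p)) := by
  have hsqrt : 1 ≤ √a := one_le_sqrt.mpr ha
  rw [sqrt_mul (by linarith), mul_rpow (by positivity) (by positivity), sqrt_eq_rpow (n : ℝ),
    ← rpow_mul n.cast_nonneg, one_div_mul_one_div]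
  gcongr
  exact rpow_le_self_of_one_le hsqrt ((div_le_one (by linarith)).mpr hp)

theorem obsDiam_lp_product_le_general
    {X : Type*} [MetricSpace X] [TopologicalSpace.SeparableSpace X]
    [MeasurableSpace X] [BorelSpace X]
    (μ : Measure X) [IsProbabilityMeasure μ]
    (hbdd : IsBounded (Set.univ : Set X))
    (κ : ℝ) (hκ0 : 0 < κ) (hκ1 : κ < 1)
    (p : ℝ) (hp : 1 ≤ p)
    (n : ℕ) :
    obsDiam (lpDist dist p) (Measure.pi fun _ : Fin n => μ) κ ≤
      (if p = 1 then 4 * Real.sqrt (2 * Real.log (2 / κ))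
        else 4 + 4 * Real.sqrt (2 * Real.log (2 / κ))) *
        Metric.diam (Set.univ : Set X) * (n : ℝ) ^ (1 / (2 * p)) := by
  have : SecondCountableTopology X := UniformSpace.secondCountable_of_separable X
  have hlog : 1 ≤ 2 * log (2 / κ) := by
    have : log 2 ≤ log (2 / κ) := log_le_log two_pos ((le_div_iff₀ hκ0).mpr (by linarith))
    linarith [log_two_gt_d9]
  have hC : √(2 * log (2 / κ)) ≤ if p = 1 then 4 * √(2 * log (2 / κ))
      else 4 + 4 * √(2 * log (2 / κ)) := by
    split_ifs <;> linarith [sqrt_nonneg (2 * log (2 / κ))]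
  refine obsDiam_le (by have := (sqrt_nonneg _).trans hC; positivity) fun f hf hlip ↦ ?_
  calc partialDiam _ (1 - κ)
      ≤ Metric.diam (univ : Set X) * √(2 * log (2 / κ) * n) ^ (1 / p) :=
        partialDiam_map_pi_le (fun _ ↦ μ) Metric.diam_nonneg
          (fun a b ↦ Metric.dist_le_diam_of_mem hbdd trivial trivial) hκ0 hκ1 hp hf hlip
    _ ≤ Metric.diam (univ : Set X) * (√(2 * log (2 / κ)) * (n : ℝ) ^ (1 / (2 * p))) := by
        gcongr
        exact sqrt_mul_natCast_rpow_le hlog hp n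
    _ ≤ _ := by
        rw [mul_left_comm, ← mul_assoc]
        gcongr

/-- **Theorem 1.1.** For an mm-space `X` of finite diameter, `0 < κ < 1` and `1 ≤ p < ∞`,
`ObsDiam(X_p^n; -κ) ≤ C_{κ,p} · diam X · n^(1/(2p))`. -/
theorem obsDiam_lp_product_le
    {X : Type*} [MetricSpace X] [CompleteSpace X] [TopologicalSpace.SeparableSpace X]
    [MeasurableSpace X] [BorelSpace X]
    (μ : Measure X) [IsProbabilityMeasure μ]
    (hbdd : IsBounded (Set.univ : Set X))
    (κ : ℝ) (hκ0 : 0 < κ) (hκ1 : κ < 1)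
    (p : ℝ) (hp : 1 ≤ p)
    (n : ℕ) (hn : 1 ≤ n) :
    obsDiam (lpDist dist p) (Measure.pi fun _ : Fin n => μ) κ ≤
      (if p = 1 then 4 * Real.sqrt (2 * Real.log (2 / κ))
        else 4 + 4 * Real.sqrt (2 * Real.log (2 / κ))) *
        Metric.diam (Set.univ : Set X) * (n : ℝ) ^ (1 / (2 * p)) :=
  obsDiam_lp_product_le_general μ hbdd κ hκ0 hκ1 p hp n
end
end

section
/- Let X be an mm-space and r > 0. Then α_X(r) ≤ sup{ κ > 0 : ObsDiam(X; -κ) ≥ r }, where α_X is the concentration function of X. -/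
/-!
Given `A` with `μ A ≥ 1/2`, put `e = 1 - μ(A_r)` and observe `X` through the 1-Lipschitz map
`f = infDist · A`. For `0 < κ < e`, a set of `f_*μ`-measure `≥ 1 - κ > 1/2` must meet `{f ≤ 0}`,
whose complement has measure `≤ 1/2`, and `{f ≥ r}`, whose complement `A_r` has measure
`1 - e < 1 - κ`; so it has diameter `≥ r`, i.e. `ObsDiam(X; -κ) ≥ r`. Hence the whole interval
`(0, e)` lies in the set whose supremum is taken.
-/

open MeasureTheory Filter Topology Bornology
open scoped ENNReal

noncomputable section

/-- The concentration function `α_X(r)`: the supremum of `1 - μ(A_r)` over Borel sets `A`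
with `μ A ≥ 1/2`, where `A_r` is the open `r`-neighborhood of `A`. -/
def concFn {X : Type*} [PseudoMetricSpace X] [MeasurableSpace X]
    (μ : Measure X) (r : ℝ) : ℝ :=
  sSup {e : ℝ | ∃ A : Set X, MeasurableSet A ∧ (1 / 2 : ℝ≥0∞) ≤ μ A ∧
    e = 1 - (μ (Metric.thickening r A)).toReal}

open Set Metric

section PartialDiam

variable {ν : Measure ℝ} {α : ℝ}

lemma partialDiam_le_diam {B : Set ℝ} (hBm : MeasurableSet B) (hBb : IsBounded B)
    (hνB : ENNReal.ofReal α ≤ ν B) : partialDiam ν α ≤ diam B :=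
  csInf_le ⟨0, by rintro _ ⟨C, -, -, -, rfl⟩; exact diam_nonneg⟩ ⟨B, hBm, hBb, hνB, rfl⟩

lemma partialDiam_nonpos_of_nonpos (hα : α ≤ 0) : partialDiam ν α ≤ 0 := by
  simpa using partialDiam_le_diam (ν := ν) MeasurableSet.empty isBounded_empty
    (by simp [ENNReal.ofReal_eq_zero.2 hα])

/-- A set of mass `≥ α` cannot avoid `(-∞, a]` nor `[b, ∞)` when both complements carry less
than `α`, so it contains two points at distance `≥ b - a`. -/
lemma sub_le_partialDiam {a b : ℝ}
    (hex : ∃ B, MeasurableSet B ∧ IsBounded B ∧ ENNReal.ofReal α ≤ ν B)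
    (ha : ν (Ioi a) < ENNReal.ofReal α) (hb : ν (Iio b) < ENNReal.ofReal α) :
    b - a ≤ partialDiam ν α := by
  obtain ⟨B₀, hB₀m, hB₀b, hνB₀⟩ := hex
  refine le_csInf ⟨_, B₀, hB₀m, hB₀b, hνB₀, rfl⟩ ?_
  rintro _ ⟨B, -, hBb, hνB, rfl⟩
  obtain ⟨x, hxB, hxa⟩ : ∃ x ∈ B, x ≤ a := by
    by_contra! h
    exact (hνB.trans (measure_mono fun x hx => h x hx)).not_gt ha
  obtain ⟨y, hyB, hyb⟩ : ∃ y ∈ B, b ≤ y := by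
    by_contra! h
    exact (hνB.trans (measure_mono fun y hy => h y hy)).not_gt hb
  calc b - a ≤ dist y x := by rw [Real.dist_eq]; exact le_abs.2 (Or.inl (by linarith))
    _ ≤ diam B := dist_le_diam_of_mem hBb hyB hxB

end PartialDiam

lemma obsDiam_nonpos_of_one_le {X : Type*} [MeasurableSpace X] (d : X → X → ℝ)
    (μ : Measure X) {κ : ℝ} (hκ : 1 ≤ κ) : obsDiam d μ κ ≤ 0 :=
  Real.sSup_nonpos fun _ ⟨_, _, _, h⟩ => h ▸ partialDiam_nonpos_of_nonpos (by linarith)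

section Lipschitz

variable {X : Type*} [PseudoMetricSpace X] [MeasurableSpace X]
  (μ : Measure X) [IsProbabilityMeasure μ]

lemma exists_lt_measure_ball_nat (x : X) {c : ℝ≥0∞} (hc : c < 1) :
    ∃ n : ℕ, c < μ (ball x n) := by
  have h := tendsto_measure_iUnion_atTop (μ := μ) fun m n (hmn : m ≤ n) =>
    ball_subset_ball (x := x) (Nat.cast_le.2 hmn)
  rw [iUnion_ball_nat, measure_univ] at h
  exact (h.eventually (lt_mem_nhds hc)).exists

lemma exists_le_map_closedBall {κ : ℝ} (hκ : 0 < κ) :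
    ∃ (x₀ : X) (R : ℝ), 0 ≤ R ∧ ∀ g : X → ℝ, Measurable g → (∀ x y, |g x - g y| ≤ dist x y) →
      ENNReal.ofReal (1 - κ) ≤ μ.map g (closedBall (g x₀) R) := by
  obtain ⟨x₀⟩ := nonempty_of_isProbabilityMeasure μ
  obtain ⟨n, hn⟩ := exists_lt_measure_ball_nat μ x₀
    (ENNReal.ofReal_lt_one.2 (sub_lt_self 1 hκ))
  refine ⟨x₀, n, n.cast_nonneg, fun g hg hglip => ?_⟩
  rw [Measure.map_apply hg measurableSet_closedBall]
  exact hn.le.trans (measure_mono fun x hx => (hglip x x₀).trans (le_of_lt hx))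

lemma partialDiam_map_le_obsDiam {κ : ℝ} (hκ : 0 < κ) {f : X → ℝ} (hf : Measurable f)
    (hflip : ∀ x y, |f x - f y| ≤ dist x y) :
    partialDiam (μ.map f) (1 - κ) ≤ obsDiam dist μ κ := by
  obtain ⟨x₀, R, hR₀, hR⟩ := exists_le_map_closedBall μ hκ
  refine le_csSup ⟨2 * R, ?_⟩ ⟨f, hf, hflip, rfl⟩
  rintro _ ⟨g, hg, hglip, rfl⟩
  exact (partialDiam_le_diam measurableSet_closedBall isBounded_closedBall
    (hR g hg hglip)).trans (diam_closedBall hR₀)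

end Lipschitz

lemma le_obsDiam_of_lt_one_sub_measure_thickening {X : Type*} [PseudoMetricSpace X]
    [MeasurableSpace X] [BorelSpace X] (μ : Measure X) [IsProbabilityMeasure μ]
    {A : Set X} (hAm : MeasurableSet A) (hμA : (1 / 2 : ℝ≥0∞) ≤ μ A) {r κ : ℝ} (hr : 0 < r)
    (hκ : 0 < κ) (hκe : κ < 1 - (μ (thickening r A)).toReal) :
    r ≤ obsDiam dist μ κ := by
  set f : X → ℝ := (infDist · A)
  have hf : Measurable f := (continuous_infDist_pt A).measurable
  have hflip : ∀ x y, |f x - f y| ≤ dist x y := fun x y => by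
    simpa [Real.dist_eq] using (lipschitz_infDist_pt A).dist_le_mul x y
  have hA : A.Nonempty := nonempty_iff_ne_empty.2 fun h => by simp [h] at hμA
  have hκ_half : κ < 1 / 2 := by
    have : (1 / 2 : ℝ) ≤ (μ (thickening r A)).toReal := by
      simpa using ENNReal.toReal_mono (measure_ne_top μ _)
        (hμA.trans (measure_mono (self_subset_thickening hr A)))
    linarith
  have hpos : μ.map f (Ioi 0) < ENNReal.ofReal (1 - κ) := by
    rw [Measure.map_apply hf measurableSet_Ioi]
    calc μ (f ⁻¹' Ioi 0) ≤ μ Aᶜ := measure_mono fun x hx hxA => by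
            simp [f, infDist_zero_of_mem hxA] at hx
      _ = 1 - μ A := prob_compl_eq_one_sub hAm
      _ ≤ 1 / 2 := by
          rw [← ENNReal.sub_half ENNReal.one_ne_top]; exact tsub_le_tsub_left hμA 1
      _ < ENNReal.ofReal (1 - κ) := by
          rw [← ENNReal.ofReal_one, ← ENNReal.ofReal_ofNat 2, ← ENNReal.ofReal_div_of_pos two_pos]
          exact (ENNReal.ofReal_lt_ofReal_iff (by linarith)).2 (by linarith)
  have hlt : μ.map f (Iio r) < ENNReal.ofReal (1 - κ) := by
    have : f ⁻¹' Iio r = thickening r A := by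
      ext x; exact (mem_thickening_iff_infDist_lt hA).symm
    rw [Measure.map_apply hf measurableSet_Iio, this,
      ENNReal.lt_ofReal_iff_toReal_lt (measure_ne_top μ _)]
    linarith
  obtain ⟨x₀, R, -, hR⟩ := exists_le_map_closedBall μ hκ
  calc r = r - 0 := (sub_zero r).symm
    _ ≤ partialDiam (μ.map f) (1 - κ) := sub_le_partialDiam
        ⟨_, measurableSet_closedBall, isBounded_closedBall, hR f hf hflip⟩ hpos hlt
    _ ≤ obsDiam dist μ κ := partialDiam_map_le_obsDiam μ hκ hf hflip

theorem concFn_le_sup_obsDiam_general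
    {X : Type*} [MetricSpace X]
    [MeasurableSpace X] [BorelSpace X]
    (μ : Measure X) [IsProbabilityMeasure μ]
    (r : ℝ) (hr : 0 < r) :
    concFn μ r ≤ sSup {κ : ℝ | 0 < κ ∧ r ≤ obsDiam dist μ κ} := by
  set T := {κ : ℝ | 0 < κ ∧ r ≤ obsDiam dist μ κ}
  have hT : BddAbove T := ⟨1, fun κ ⟨_, hκr⟩ => le_of_not_gt fun hκ =>
    (hκr.trans (obsDiam_nonpos_of_one_le dist μ hκ.le)).not_gt hr⟩
  have hT₀ : 0 ≤ sSup T := Real.sSup_nonneg fun κ hκ => hκ.1.le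
  refine Real.sSup_le ?_ hT₀
  rintro _ ⟨A, hAm, hμA, rfl⟩
  set e := 1 - (μ (thickening r A)).toReal
  rcases le_or_gt e 0 with he | he
  · exact he.trans hT₀
  calc e = sSup (Ioo 0 e) := (csSup_Ioo he).symm
    _ ≤ sSup T := csSup_le_csSup hT (nonempty_Ioo.2 he) fun κ hκ =>
        ⟨hκ.1, le_obsDiam_of_lt_one_sub_measure_thickening μ hAm hμA hr hκ.1 hκ.2⟩

/-- **Proposition 2.6 (2).** `α_X(r) ≤ sup{κ > 0 : ObsDiam(X;-κ) ≥ r}`. -/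
theorem concFn_le_sup_obsDiam
    {X : Type*} [MetricSpace X] [CompleteSpace X] [TopologicalSpace.SeparableSpace X]
    [MeasurableSpace X] [BorelSpace X]
    (μ : Measure X) [IsProbabilityMeasure μ]
    (r : ℝ) (hr : 0 < r) :
    concFn μ r ≤ sSup {κ : ℝ | 0 < κ ∧ r ≤ obsDiam dist μ κ} :=
  concFn_le_sup_obsDiam_general μ r hr
end
end

section
/- For any mm-space X and any κ > 0, one has ObsDiam(X; -2κ) ≤ Sep(X; κ, κ). -/
/-!
Push `μ` forward along a 1-Lipschitz `f : X → ℝ` and let `a` and `b` be the lower `κ`- and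
`(1 - κ)`-quantiles of `f_*μ`. Then `[a, b]` carries mass at least `1 - 2κ`, so
`diam(f_*μ; 1 - 2κ) ≤ b - a`, while `f⁻¹(-∞, a]` and `f⁻¹[b, ∞)` both have measure at least `κ`
and are at distance at least `b - a` since `f` is 1-Lipschitz. The supremum defining `Sep` is
finite because every set of measure at least `κ` meets a fixed ball carrying mass more than
`1 - κ`.
-/

open MeasureTheory Filter Topology Bornology

noncomputable section

/-- The distance between two subsets, with respect to an explicit distance `d`. -/
def setDist' {X : Type*} (d : X → X → ℝ) (A B : Set X) : ℝ :=
  sInf {r : ℝ | ∃ x ∈ A, ∃ y ∈ B, r = d x y}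

/-- The separation distance `Sep(X; κ₀, κ₁)`: the supremum of `d(A₀, A₁)` over pairs of
Borel sets with `μ A₀ ≥ κ₀` and `μ A₁ ≥ κ₁` (zero if no such pair exists). -/
def sepTwo {X : Type*} [MeasurableSpace X] (d : X → X → ℝ) (μ : Measure X)
    (κ₀ κ₁ : ℝ) : ℝ :=
  sSup ({0} ∪ {r : ℝ | ∃ A₀ A₁ : Set X, MeasurableSet A₀ ∧ MeasurableSet A₁ ∧
    ENNReal.ofReal κ₀ ≤ μ A₀ ∧ ENNReal.ofReal κ₁ ≤ μ A₁ ∧ r = setDist' d A₀ A₁})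

open Set ProbabilityTheory
open scoped ENNReal

def lowerQuantile (F : ℝ → ℝ) (q : ℝ) : ℝ :=
  sInf {t | q ≤ F t}

section lowerQuantile

variable {F : ℝ → ℝ} {q t : ℝ}

lemma lowerQuantile_le (hF : BddBelow {t | q ≤ F t}) (ht : q ≤ F t) : lowerQuantile F q ≤ t :=
  csInf_le hF ht

lemma lt_of_lt_lowerQuantile (hF : BddBelow {t | q ≤ F t}) (ht : t < lowerQuantile F q) :
    F t < q := by
  by_contra! h
  exact ht.not_ge (lowerQuantile_le hF h)

end lowerQuantile

namespace StieltjesFunction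

variable (F : StieltjesFunction ℝ) {q : ℝ}

lemma le_apply_lowerQuantile (hne : {t | q ≤ F t}.Nonempty) : q ≤ F (lowerQuantile F q) := by
  refine ge_of_tendsto ((F.right_continuous _).mono Ioi_subset_Ici_self)
    (eventually_nhdsWithin_of_forall fun t ht => ?_)
  obtain ⟨s, hs, hst⟩ := exists_lt_of_csInf_lt hne ht
  exact hs.trans (F.mono hst.le)

lemma leftLim_lowerQuantile_le (hF : BddBelow {t | q ≤ F t}) :
    Function.leftLim F (lowerQuantile F q) ≤ q := by
  rw [F.mono.leftLim_eq_sSup]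
  refine csSup_le (nonempty_Iio.image _) ?_
  rintro _ ⟨t, ht, rfl⟩
  exact (lt_of_lt_lowerQuantile hF ht).le

end StieltjesFunction

section cdf

variable (ν : Measure ℝ) {q : ℝ}

lemma bddBelow_setOf_le_cdf (hq : 0 < q) : BddBelow {t | q ≤ cdf ν t} := by
  obtain ⟨t₀, ht₀⟩ := eventually_atBot.1 ((tendsto_cdf_atBot ν).eventually_lt_const hq)
  refine ⟨t₀, fun t ht => ?_⟩
  by_contra! h
  exact (ht₀ t h.le).not_ge ht

lemma nonempty_setOf_le_cdf (hq : q < 1) : {t | q ≤ cdf ν t}.Nonempty :=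
  ((tendsto_cdf_atTop ν).eventually_const_lt hq).exists.imp fun _ => le_of_lt

variable [IsProbabilityMeasure ν]

lemma le_measureReal_Iic_lowerQuantile (hq : q < 1) :
    q ≤ ν.real (Iic (lowerQuantile (cdf ν) q)) := by
  rw [← cdf_eq_real]
  exact (cdf ν).le_apply_lowerQuantile (nonempty_setOf_le_cdf ν hq)

lemma measureReal_Iio_lowerQuantile_le (hq : 0 < q) :
    ν.real (Iio (lowerQuantile (cdf ν) q)) ≤ q := by
  refine ENNReal.toReal_le_of_le_ofReal hq.le ?_
  have h := (cdf ν).measure_Iio (tendsto_cdf_atBot ν) (lowerQuantile (cdf ν) q)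
  rw [measure_cdf, sub_zero] at h
  rw [h]
  exact ENNReal.ofReal_le_ofReal ((cdf ν).leftLim_lowerQuantile_le (bddBelow_setOf_le_cdf ν hq))

theorem exists_le_measure_Iic_Ici_Icc {κ : ℝ} (hκ : 0 < κ) (h2κ : 2 * κ ≤ 1) :
    ∃ a b, a ≤ b ∧ ENNReal.ofReal κ ≤ ν (Iic a) ∧ ENNReal.ofReal κ ≤ ν (Ici b) ∧
      ENNReal.ofReal (1 - 2 * κ) ≤ ν (Icc a b) := by
  set a := lowerQuantile (cdf ν) κ
  set b := lowerQuantile (cdf ν) (1 - κ)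
  have ha : κ ≤ ν.real (Iic a) := le_measureReal_Iic_lowerQuantile ν (by linarith)
  have ha' : ν.real (Iio a) ≤ κ := measureReal_Iio_lowerQuantile_le ν hκ
  have hb : 1 - κ ≤ ν.real (Iic b) := le_measureReal_Iic_lowerQuantile ν (by linarith)
  have hb' : ν.real (Iio b) ≤ 1 - κ := measureReal_Iio_lowerQuantile_le ν (by linarith)
  have hab : a ≤ b :=
    lowerQuantile_le (bddBelow_setOf_le_cdf ν hκ) (by rw [cdf_eq_real]; linarith)
  have hIcc : Icc a b = Iic b \ Iio a := by
    ext x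
    simp [and_comm]
  refine ⟨a, b, hab, ENNReal.ofReal_le_of_le_toReal ha, ENNReal.ofReal_le_of_le_toReal ?_,
    ENNReal.ofReal_le_of_le_toReal ?_⟩
  · change κ ≤ ν.real (Ici b)
    rw [← compl_Iio, probReal_compl_eq_one_sub measurableSet_Iio]
    linarith
  · change 1 - 2 * κ ≤ ν.real (Icc a b)
    rw [hIcc, measureReal_sdiff (Iio_subset_Iic_self.trans (Iic_subset_Iic.2 hab))
      measurableSet_Iio]
    linarith

end cdf

lemma partialDiam_le_diam_s10 {ν : Measure ℝ} {α : ℝ} {A : Set ℝ} (hA : MeasurableSet A)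
    (hAb : IsBounded A) (hνA : ENNReal.ofReal α ≤ ν A) : partialDiam ν α ≤ Metric.diam A :=
  csInf_le ⟨0, by rintro _ ⟨B, -, -, -, rfl⟩; exact Metric.diam_nonneg⟩ ⟨A, hA, hAb, hνA, rfl⟩

lemma nonempty_of_ofReal_le_measure {X : Type*} [MeasurableSpace X] {μ : Measure X} {A : Set X}
    {κ : ℝ} (hκ : 0 < κ) (hA : ENNReal.ofReal κ ≤ μ A) : A.Nonempty :=
  nonempty_of_measure_ne_zero ((ENNReal.ofReal_pos.2 hκ).trans_le hA).ne'

lemma le_setDist' {X : Type*} {d : X → X → ℝ} {A B : Set X} {r : ℝ} (hA : A.Nonempty)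
    (hB : B.Nonempty) (h : ∀ x ∈ A, ∀ y ∈ B, r ≤ d x y) : r ≤ setDist' d A B := by
  obtain ⟨x, hx⟩ := hA
  obtain ⟨y, hy⟩ := hB
  refine le_csInf ⟨d x y, x, hx, y, hy, rfl⟩ ?_
  rintro _ ⟨x, hx, y, hy, rfl⟩
  exact h x hx y hy

section PseudoMetricSpace

variable {X : Type*} [PseudoMetricSpace X]

lemma setDist'_le_dist {A B : Set X} {x y : X} (hx : x ∈ A) (hy : y ∈ B) :
    setDist' dist A B ≤ dist x y :=
  csInf_le ⟨0, by rintro _ ⟨x, -, y, -, rfl⟩; exact dist_nonneg⟩ ⟨x, hx, y, hy, rfl⟩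

lemma sub_le_setDist'_preimage_Iic_Ici {f : X → ℝ} (hf : ∀ x y, |f x - f y| ≤ dist x y)
    {a b : ℝ} (ha : (f ⁻¹' Iic a).Nonempty) (hb : (f ⁻¹' Ici b).Nonempty) :
    b - a ≤ setDist' dist (f ⁻¹' Iic a) (f ⁻¹' Ici b) := by
  refine le_setDist' ha hb fun x (hx : f x ≤ a) y (hy : b ≤ f y) => ?_
  calc b - a ≤ f y - f x := by linarith
    _ ≤ |f x - f y| := abs_sub_comm (f x) (f y) ▸ le_abs_self _
    _ ≤ dist x y := hf x y

variable [MeasurableSpace X] (μ : Measure X)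

lemma exists_forall_inter_ball_nonempty [IsFiniteMeasure μ] (x₀ : X) {ε : ℝ≥0∞} (hε : ε ≠ 0) :
    ∃ R : ℝ, ∀ A, MeasurableSet A → ε ≤ μ A → (A ∩ Metric.ball x₀ R).Nonempty := by
  have hballs := (tendsto_measure_iUnion_atTop (μ := μ) fun m n hmn =>
    Metric.ball_subset_ball (x := x₀) (Nat.cast_le.2 hmn)).add_const ε
  rw [Metric.iUnion_ball_nat] at hballs
  obtain ⟨n, hn⟩ : ∃ n : ℕ, μ univ < μ (Metric.ball x₀ n) + ε :=
    (hballs.eventually_const_lt (ENNReal.lt_add_right (measure_ne_top μ univ) hε)).exists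
  refine ⟨n, fun A hA hεA => ?_⟩
  by_contra hempty
  have hdisj : Disjoint (Metric.ball x₀ n) A :=
    disjoint_left.2 fun x hx hxA => hempty ⟨x, hxA, hx⟩
  have : μ univ < μ (Metric.ball x₀ n ∪ A) := by
    rw [measure_union hdisj hA]
    exact hn.trans_le (by gcongr)
  exact this.not_ge (measure_mono (subset_univ _))

lemma sepTwo_nonneg (κ₀ κ₁ : ℝ) : 0 ≤ sepTwo dist μ κ₀ κ₁ :=
  Real.sSup_nonneg' ⟨0, Or.inl rfl, le_rfl⟩

lemma setDist'_le_sepTwo [IsFiniteMeasure μ] {κ₀ κ₁ : ℝ} (hκ₀ : 0 < κ₀) (hκ₁ : 0 < κ₁)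
    {A₀ A₁ : Set X} (hA₀ : MeasurableSet A₀) (hA₁ : MeasurableSet A₁)
    (hμA₀ : ENNReal.ofReal κ₀ ≤ μ A₀) (hμA₁ : ENNReal.ofReal κ₁ ≤ μ A₁) :
    setDist' dist A₀ A₁ ≤ sepTwo dist μ κ₀ κ₁ := by
  obtain ⟨x₀, -⟩ := nonempty_of_ofReal_le_measure hκ₀ hμA₀
  obtain ⟨R₀, hR₀⟩ := exists_forall_inter_ball_nonempty μ x₀ (ENNReal.ofReal_pos.2 hκ₀).ne'
  obtain ⟨R₁, hR₁⟩ := exists_forall_inter_ball_nonempty μ x₀ (ENNReal.ofReal_pos.2 hκ₁).ne'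
  refine le_csSup ⟨max (R₀ + R₁) 0, ?_⟩ (Or.inr ⟨A₀, A₁, hA₀, hA₁, hμA₀, hμA₁, rfl⟩)
  rintro _ (rfl | ⟨B₀, B₁, hB₀, hB₁, hμB₀, hμB₁, rfl⟩)
  · exact le_max_right _ _
  obtain ⟨x, hxB, hx⟩ := hR₀ B₀ hB₀ hμB₀
  obtain ⟨y, hyB, hy⟩ := hR₁ B₁ hB₁ hμB₁
  calc setDist' dist B₀ B₁ ≤ dist x y := setDist'_le_dist hxB hyB
    _ ≤ dist x x₀ + dist y x₀ := dist_triangle_right _ _ _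
    _ ≤ max (R₀ + R₁) 0 := le_max_of_le_left (add_le_add hx.out.le hy.out.le)

end PseudoMetricSpace

theorem obsDiam_le_sep_general
    {X : Type*} [MetricSpace X]
    [MeasurableSpace X]
    (μ : Measure X) [IsProbabilityMeasure μ]
    (κ : ℝ) (hκ : 0 < κ) :
    obsDiam dist μ (2 * κ) ≤ sepTwo dist μ κ κ := by
  refine Real.sSup_le ?_ (sepTwo_nonneg μ κ κ)
  rintro _ ⟨f, hf, hlip, rfl⟩
  rcases le_or_gt (1 - 2 * κ) 0 with h2κ | h2κ
  · refine (partialDiam_le_diam_s10 MeasurableSet.empty isBounded_empty ?_).trans ?_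
    · simp [ENNReal.ofReal_eq_zero.2 h2κ]
    · simpa using sepTwo_nonneg μ κ κ
  have := Measure.isProbabilityMeasure_map (μ := μ) hf.aemeasurable
  obtain ⟨a, b, hab, ha, hb, habν⟩ :=
    exists_le_measure_Iic_Ici_Icc (μ.map f) hκ (by linarith)
  rw [Measure.map_apply hf measurableSet_Iic] at ha
  rw [Measure.map_apply hf measurableSet_Ici] at hb
  calc partialDiam (μ.map f) (1 - 2 * κ) ≤ Metric.diam (Icc a b) :=
        partialDiam_le_diam_s10 measurableSet_Icc (Metric.isBounded_Icc a b) habν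
    _ = b - a := Real.diam_Icc hab
    _ ≤ setDist' dist (f ⁻¹' Iic a) (f ⁻¹' Ici b) :=
        sub_le_setDist'_preimage_Iic_Ici hlip (nonempty_of_ofReal_le_measure hκ ha)
          (nonempty_of_ofReal_le_measure hκ hb)
    _ ≤ sepTwo dist μ κ κ :=
        setDist'_le_sepTwo μ hκ hκ (hf measurableSet_Iic) (hf measurableSet_Ici) ha hb

/-- **Proposition 2.8, first inequality.** `ObsDiam(X;-2κ) ≤ Sep(X;κ,κ)` for `κ > 0`. -/
theorem obsDiam_le_sep
    {X : Type*} [MetricSpace X] [CompleteSpace X] [TopologicalSpace.SeparableSpace X]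
    [MeasurableSpace X] [BorelSpace X]
    (μ : Measure X) [IsProbabilityMeasure μ]
    (κ : ℝ) (hκ : 0 < κ) :
    obsDiam dist μ (2 * κ) ≤ sepTwo dist μ κ κ :=
  obsDiam_le_sep_general μ κ hκ
end
end

section
/- Let X and Y be two mm-spaces. For any natural number n ≥ 1 and any real number p with 1 ≤ p ≤ +∞, the box distance satisfies □(X_p^n, Y_p^n) ≤ n · n! · □(X, Y). -/
/-!
Pull a pair of parameters `φ, ψ` of `X, Y` that is `ε`-close on `I₀` back along a parameter `q`
of the Lebesgue cube `[0,1)^n`: the maps `s ↦ (φ (q s i))ᵢ`, `s ↦ (ψ (q s i))ᵢ` parametrize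
`X^n, Y^n`, they are compared on `q⁻¹(I₀^n)`, of measure `(1 - ε)^n ≥ 1 - nε`, and there the
`l_p` distances differ by at most `n ε`: writing them as norms in `PiLp p`, the reverse triangle
inequality bounds their difference by the `l_1` norm of the coordinatewise differences. Hence
`□(X_p^n, Y_p^n) ≤ n □(X,Y) ≤ n · n! · □(X,Y)`.
-/

open MeasureTheory Filter Topology Bornology
open scoped ENNReal

noncomputable section

/-- The `l_p`-distance on the `n`-fold product for `1 ≤ p ≤ ∞`
(`l_∞` is the sup distance). -/
def lpDist' {X : Type*} (d : X → X → ℝ) (p : ℝ≥0∞) {n : ℕ} (x y : Fin n → X) : ℝ :=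
  if p = ∞ then ⨆ i, d (x i) (y i) else lpDist d p.toReal x y

/-- A parameter of an mm-space: a Borel map `φ : [0,1) → X` pushing the Lebesgue measure
forward to `μ`. -/
def IsParameter {X : Type*} [MeasurableSpace X] (φ : ℝ → X) (μ : Measure X) : Prop :=
  Measurable φ ∧ Measure.map φ (volume.restrict (Set.Ico (0 : ℝ) 1)) = μ

/-- The box distance `□(X,Y)` between two mm-spaces, given by explicit distance
functions `dX`, `dY`. -/
def boxDist {X Y : Type*} [MeasurableSpace X] [MeasurableSpace Y]
    (dX : X → X → ℝ) (dY : Y → Y → ℝ) (μX : Measure X) (μY : Measure Y) : ℝ :=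
  sInf {ε : ℝ | 0 ≤ ε ∧ ∃ φ : ℝ → X, ∃ ψ : ℝ → Y,
    IsParameter φ μX ∧ IsParameter ψ μY ∧
    ∃ I₀ : Set ℝ, MeasurableSet I₀ ∧ I₀ ⊆ Set.Ico (0 : ℝ) 1 ∧
      ENNReal.ofReal (1 - ε) ≤ volume I₀ ∧
      ∀ s ∈ I₀, ∀ t ∈ I₀, |dX (φ s) (φ t) - dY (ψ s) (ψ t)| ≤ ε}

open Set

lemma PiLp.norm_le_sum_norm {p : ℝ≥0∞} [Fact (1 ≤ p)] {ι : Type*} [Fintype ι] {β : ι → Type*}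
    [∀ i, SeminormedAddCommGroup (β i)] (f : PiLp p β) : ‖f‖ ≤ ∑ i, ‖f i‖ := by
  classical
  have hf : ∑ i, PiLp.single p i (f i) = f := by
    simp_rw [← PiLp.toLp_single, ← WithLp.toLp_sum, Finset.univ_sum_single]
  calc ‖f‖ = ‖∑ i, PiLp.single p i (f i)‖ := by rw [hf]
    _ ≤ ∑ i, ‖PiLp.single p i (f i)‖ := norm_sum_le _ _
    _ = ∑ i, ‖f i‖ := by simp only [PiLp.norm_single]

lemma lpDist'_eq_norm {X : Type*} {d : X → X → ℝ} (hd : ∀ x y, 0 ≤ d x y) {p : ℝ≥0∞}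
    [Fact (1 ≤ p)] {n : ℕ} (x y : Fin n → X) :
    lpDist' d p x y = ‖WithLp.toLp p fun i => d (x i) (y i)‖ := by
  rcases eq_or_ne p ∞ with rfl | hp
  · simp [lpDist', PiLp.norm_eq_ciSup, abs_of_nonneg (hd _ _)]
  · have hp₀ : 0 < p.toReal := ENNReal.toReal_pos (zero_lt_one.trans_le Fact.out).ne' hp
    rw [lpDist', if_neg hp, lpDist, PiLp.norm_eq_sum hp₀]
    simp [abs_of_nonneg (hd _ _)]

lemma abs_lpDist'_sub_lpDist'_le {X Y : Type*} {dX : X → X → ℝ} {dY : Y → Y → ℝ}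
    (hdX : ∀ x x', 0 ≤ dX x x') (hdY : ∀ y y', 0 ≤ dY y y') {p : ℝ≥0∞} [Fact (1 ≤ p)]
    {n : ℕ} {x x' : Fin n → X} {y y' : Fin n → Y} {ε : ℝ}
    (h : ∀ i, |dX (x i) (x' i) - dY (y i) (y' i)| ≤ ε) :
    |lpDist' dX p x x' - lpDist' dY p y y'| ≤ n * ε := by
  rw [lpDist'_eq_norm hdX, lpDist'_eq_norm hdY]
  calc _ ≤ ‖(WithLp.toLp p fun i => dX (x i) (x' i)) - WithLp.toLp p fun i => dY (y i) (y' i)‖ :=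
        abs_norm_sub_norm_le _ _
    _ ≤ ∑ i, |dX (x i) (x' i) - dY (y i) (y' i)| := PiLp.norm_le_sum_norm _
    _ ≤ ∑ _i : Fin n, ε := Finset.sum_le_sum fun i _ => h i
    _ = n * ε := by simp

lemma ofReal_one_sub_mul_le_pow (ε : ℝ) (n : ℕ) :
    ENNReal.ofReal (1 - n * ε) ≤ ENNReal.ofReal (1 - ε) ^ n := by
  rcases le_or_gt ε 1 with hε1 | hε1
  · rw [← ENNReal.ofReal_pow (sub_nonneg.2 hε1)]
    refine ENNReal.ofReal_le_ofReal ?_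
    simpa [← sub_eq_add_neg] using one_add_mul_le_pow (a := -ε) (by linarith) n
  · rcases Nat.eq_zero_or_pos n with rfl | hn
    · simp
    · rw [ENNReal.ofReal_of_nonpos]
      · exact zero_le
      · nlinarith [show (1 : ℝ) ≤ n by exact_mod_cast hn]

lemma map_projIcc_volume_restrict_Ico :
    (volume.restrict (Ico (0 : ℝ) 1)).map (projIcc 0 1 zero_le_one) =
      (volume : Measure unitInterval) := by
  rw [Measure.restrict_congr_set Ico_ae_eq_Icc, ← unitInterval.measurePreserving_coe.map_eq,
    Measure.map_map continuous_projIcc.measurable measurable_subtype_coe]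
  simp [Function.comp_def, projIcc_val]

lemma exists_isParameter {E : Type*} [MeasurableSpace E] [StandardBorelSpace E] (μ : Measure E)
    [IsProbabilityMeasure μ] : ∃ φ : ℝ → E, IsParameter φ μ := by
  have := nonempty_of_isProbabilityMeasure μ
  obtain ⟨f, hf, hfμ⟩ := μ.exists_measurable_map_eq
  refine ⟨f ∘ projIcc 0 1 zero_le_one, hf.comp continuous_projIcc.measurable, ?_⟩
  rw [← Measure.map_map hf continuous_projIcc.measurable, map_projIcc_volume_restrict_Ico, hfμ]

abbrev unitCubeVolume (ι : Type*) [Fintype ι] : Measure (ι → ℝ) :=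
  Measure.pi fun _ : ι => volume.restrict (Ico (0 : ℝ) 1)

lemma IsParameter.pi {ι : Type*} [Fintype ι] {X : Type*} [MeasurableSpace X] {μ : Measure X}
    {φ : ℝ → X} (hφ : IsParameter φ μ) {q : ℝ → ι → ℝ}
    (hq : IsParameter q (unitCubeVolume ι)) :
    IsParameter (fun s i => φ (q s i)) (Measure.pi fun _ : ι => μ) := by
  have hφι : Measurable fun (v : ι → ℝ) i => φ (v i) :=
    measurable_pi_lambda _ fun i => hφ.1.comp (measurable_pi_apply i)
  refine ⟨hφι.comp hq.1, ?_⟩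
  change Measure.map ((fun v i => φ (v i)) ∘ q) _ = _
  rw [← Measure.map_map hφι hq.1, hq.2, Measure.pi_map_pi fun _ => hφ.1.aemeasurable, hφ.2]

lemma IsParameter.volume_preimage_pi_inter_Ico {ι : Type*} [Fintype ι] {q : ℝ → ι → ℝ}
    (hq : IsParameter q (unitCubeVolume ι)) {I : Set ℝ} (hI : MeasurableSet I)
    (hI₁ : I ⊆ Ico 0 1) :
    volume (q ⁻¹' univ.pi (fun _ => I) ∩ Ico 0 1) = volume I ^ Fintype.card ι := by
  rw [← Measure.restrict_apply' measurableSet_Ico,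
    ← Measure.map_apply hq.1 (MeasurableSet.univ_pi fun _ => hI), hq.2, Measure.pi_pi,
    Measure.restrict_eq_self _ hI₁, Finset.prod_const, Finset.card_univ]

def BoxApprox {X Y : Type*} [MeasurableSpace X] [MeasurableSpace Y]
    (dX : X → X → ℝ) (dY : Y → Y → ℝ) (μX : Measure X) (μY : Measure Y) (ε : ℝ) : Prop :=
  0 ≤ ε ∧ ∃ φ : ℝ → X, ∃ ψ : ℝ → Y,
    IsParameter φ μX ∧ IsParameter ψ μY ∧
    ∃ I₀ : Set ℝ, MeasurableSet I₀ ∧ I₀ ⊆ Set.Ico (0 : ℝ) 1 ∧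
      ENNReal.ofReal (1 - ε) ≤ volume I₀ ∧
      ∀ s ∈ I₀, ∀ t ∈ I₀, |dX (φ s) (φ t) - dY (ψ s) (ψ t)| ≤ ε

section BoxApprox

variable {X Y X' Y' : Type*} [MeasurableSpace X] [MeasurableSpace Y] [MeasurableSpace X']
  [MeasurableSpace Y'] {dX : X → X → ℝ} {dY : Y → Y → ℝ} {dX' : X' → X' → ℝ} {dY' : Y' → Y' → ℝ}
  {μX : Measure X} {μY : Measure Y} {μX' : Measure X'} {μY' : Measure Y'}

lemma boxDist_eq_sInf : boxDist dX dY μX μY = sInf {ε | BoxApprox dX dY μX μY ε} := rfl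

lemma boxDist_nonneg : 0 ≤ boxDist dX dY μX μY :=
  Real.sInf_nonneg fun _ hε => hε.1

lemma boxApprox_one {φ : ℝ → X} {ψ : ℝ → Y} (hφ : IsParameter φ μX) (hψ : IsParameter ψ μY) :
    BoxApprox dX dY μX μY 1 :=
  ⟨zero_le_one, φ, ψ, hφ, hψ, ∅, .empty, empty_subset _, by simp, by simp⟩

lemma boxDist_le_mul_of_boxApprox {c : ℝ} (hc : 0 ≤ c) (hne : ∃ ε, BoxApprox dX dY μX μY ε)
    (h : ∀ ε, BoxApprox dX dY μX μY ε → BoxApprox dX' dY' μX' μY' (c * ε)) :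
    boxDist dX' dY' μX' μY' ≤ c * boxDist dX dY μX μY := by
  rw [boxDist_eq_sInf, boxDist_eq_sInf, ← smul_eq_mul, ← Real.sInf_smul_of_nonneg hc]
  refine csInf_le_csInf ⟨0, fun _ hε => hε.1⟩ (Set.Nonempty.smul_set hne) ?_
  rintro _ ⟨ε, hε, rfl⟩
  exact h ε hε

lemma BoxApprox.lpProduct (hdX : ∀ x x', 0 ≤ dX x x') (hdY : ∀ y y', 0 ≤ dY y y') (p : ℝ≥0∞)
    [Fact (1 ≤ p)] (n : ℕ) {ε : ℝ} (h : BoxApprox dX dY μX μY ε) :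
    BoxApprox (lpDist' dX p) (lpDist' dY p) (Measure.pi fun _ : Fin n => μX)
      (Measure.pi fun _ : Fin n => μY) (n * ε) := by
  obtain ⟨hε, φ, ψ, hφ, hψ, I₀, hI₀, hI₀₁, hvol, hdist⟩ := h
  have : IsProbabilityMeasure (volume.restrict (Ico (0 : ℝ) 1)) := ⟨by simp⟩
  obtain ⟨q, hq⟩ := exists_isParameter (unitCubeVolume (Fin n))
  refine ⟨by positivity, _, _, hφ.pi hq, hψ.pi hq, q ⁻¹' univ.pi (fun _ => I₀) ∩ Ico 0 1,
    (hq.1 (.univ_pi fun _ => hI₀)).inter measurableSet_Ico, inter_subset_right, ?_, ?_⟩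
  · calc ENNReal.ofReal (1 - n * ε) ≤ ENNReal.ofReal (1 - ε) ^ n := ofReal_one_sub_mul_le_pow ε n
      _ ≤ volume I₀ ^ n := by gcongr
      _ = _ := by rw [hq.volume_preimage_pi_inter_Ico hI₀ hI₀₁, Fintype.card_fin]
  · rintro s ⟨hs, -⟩ t ⟨ht, -⟩
    exact abs_lpDist'_sub_lpDist'_le hdX hdY fun i => hdist _ (hs i trivial) _ (ht i trivial)

end BoxApprox

theorem boxDist_lpProduct_le_mul {X Y : Type*} [PseudoMetricSpace X] [MeasurableSpace X]
    [StandardBorelSpace X] [PseudoMetricSpace Y] [MeasurableSpace Y] [StandardBorelSpace Y]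
    (μX : Measure X) [IsProbabilityMeasure μX] (μY : Measure Y) [IsProbabilityMeasure μY]
    (n : ℕ) (p : ℝ≥0∞) [Fact (1 ≤ p)] :
    boxDist (lpDist' dist p) (lpDist' dist p)
        (Measure.pi fun _ : Fin n => μX) (Measure.pi fun _ : Fin n => μY) ≤
      n * boxDist dist dist μX μY := by
  -- `sInf ∅ = 0`, so the infimum defining `boxDist dist dist μX μY` must be shown nonempty.
  obtain ⟨φ, hφ⟩ := exists_isParameter μX
  obtain ⟨ψ, hψ⟩ := exists_isParameter μY
  exact boxDist_le_mul_of_boxApprox n.cast_nonneg ⟨1, boxApprox_one hφ hψ⟩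
    fun ε => BoxApprox.lpProduct (fun _ _ => dist_nonneg) (fun _ _ => dist_nonneg) p n

theorem boxDist_lp_product_le_general
    {X : Type*} [MetricSpace X] [CompleteSpace X] [TopologicalSpace.SeparableSpace X]
    [MeasurableSpace X] [BorelSpace X]
    {Y : Type*} [MetricSpace Y] [CompleteSpace Y] [TopologicalSpace.SeparableSpace Y]
    [MeasurableSpace Y] [BorelSpace Y]
    (μX : Measure X) [IsProbabilityMeasure μX]
    (μY : Measure Y) [IsProbabilityMeasure μY]
    (n : ℕ) (p : ℝ≥0∞) (hp : 1 ≤ p) :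
    boxDist (lpDist' dist p) (lpDist' dist p)
        (Measure.pi fun _ : Fin n => μX) (Measure.pi fun _ : Fin n => μY) ≤
      (n : ℝ) * (n.factorial : ℝ) * boxDist dist dist μX μY := by
  have : Fact (1 ≤ p) := ⟨hp⟩
  calc _ ≤ n * boxDist dist dist μX μY := boxDist_lpProduct_le_mul μX μY n p
    _ ≤ n * n.factorial * boxDist dist dist μX μY := by
      gcongr
      · exact boxDist_nonneg
      · exact le_mul_of_one_le_right n.cast_nonneg (by exact_mod_cast n.factorial_pos)

/-- **Lemma 3.3.** For mm-spaces `X`, `Y`, `n ≥ 1` and `1 ≤ p ≤ ∞`,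
`□(X_p^n, Y_p^n) ≤ n · n! · □(X,Y)`. -/
theorem boxDist_lp_product_le
    {X : Type*} [MetricSpace X] [CompleteSpace X] [TopologicalSpace.SeparableSpace X]
    [MeasurableSpace X] [BorelSpace X]
    {Y : Type*} [MetricSpace Y] [CompleteSpace Y] [TopologicalSpace.SeparableSpace Y]
    [MeasurableSpace Y] [BorelSpace Y]
    (μX : Measure X) [IsProbabilityMeasure μX]
    (μY : Measure Y) [IsProbabilityMeasure μY]
    (n : ℕ) (hn : 1 ≤ n) (p : ℝ≥0∞) (hp : 1 ≤ p) :
    boxDist (lpDist' dist p) (lpDist' dist p)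
        (Measure.pi fun _ : Fin n => μX) (Measure.pi fun _ : Fin n => μY) ≤
      (n : ℝ) * (n.factorial : ℝ) * boxDist dist dist μX μY :=
  boxDist_lp_product_le_general μX μY n p hp
end
end
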